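/- Let m ≥ 1 and i ≥ 2 be integers. Define a_t = m·∏_{l=i}^{t-1}(1 - e_l) + ∑_{l=i}^{t-1} m·c_l·∏_{h=l+1}^{t-1}(1 - e_h) for t ≥ i. Then lim_{t→∞} a_t / ( ∑_{l=i}^{t-1} ln(1 + c_l)·∏_{h=l+1}^{t-1}(1 - e_h) ) = m. -/

import Mathlib

open Filter

/-- `c_l = (2ml+1)/(l(2ml+1-2m))`. -/
noncomputable def cPAAPA (m l : ℕ) : ℝ :=
  (2 * (m : ℝ) * l + 1) / ((l : ℝ) * (2 * (m : ℝ) * l + 1 - 2 * m))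

/-- `e_l = m/(l(2ml+1-2m))`. -/
noncomputable def ePAAPA (m l : ℕ) : ℝ :=
  (m : ℝ) / ((l : ℝ) * (2 * (m : ℝ) * l + 1 - 2 * m))

/-
Write `q_l(t) = ∏_{h=l+1}^{t-1} (1 - e_h)` and `D_t = ∑_{l=i}^{t-1} log(1 + c_l) q_l(t)`.
Since `e_l ≤ 1/(2(l-1)l)` telescopes to `∑_{l ≥ 2} e_l ≤ 1/2`, every `q_l(t)`, and the first
product as well, lies in `[1/2, 1]`. Hence `D_t ≥ (log t - log i)/2 → ∞` (as `c_l ≥ 1/l`),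
while `a_t - m D_t = m ∏ (1 - e_l) + m ∑ (c_l - log(1 + c_l)) q_l(t)` stays in `[0, 10m]`
because `0 ≤ c - log(1 + c) ≤ c²` and `c_l ≤ 3/l`. Dividing by `D_t` gives the limit `m`.
-/

open Finset Real

lemma one_sub_sum_le_prod_one_sub {ι : Type*} (s : Finset ι) {x : ι → ℝ}
    (h0 : ∀ i ∈ s, 0 ≤ x i) (h1 : ∀ i ∈ s, x i ≤ 1) :
    1 - ∑ i ∈ s, x i ≤ ∏ i ∈ s, (1 - x i) := by
  classical
  induction s using Finset.induction_on with
  | empty => simp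
  | insert a s ha ih =>
    rw [prod_insert ha, sum_insert ha]
    have hxa0 := h0 a (mem_insert_self a s)
    have hxa1 := h1 a (mem_insert_self a s)
    have ih := ih (fun i hi => h0 i (mem_insert_of_mem hi))
      (fun i hi => h1 i (mem_insert_of_mem hi))
    have hs0 : 0 ≤ ∑ i ∈ s, x i := sum_nonneg fun i hi => h0 i (mem_insert_of_mem hi)
    nlinarith

lemma sum_Ico_one_div_sub_one_mul_le {a : ℕ} (ha : 2 ≤ a) (t : ℕ) :
    ∑ l ∈ Ico a t, 1 / (((l : ℝ) - 1) * l) ≤ 1 / ((a : ℝ) - 1) := by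
  have ha' : (2 : ℝ) ≤ a := by exact_mod_cast ha
  rcases le_or_gt a t with hat | hta
  · have hterm : ∀ l ∈ Ico a t, 1 / (((l : ℝ) - 1) * l) =
        -(1 / (((l + 1 : ℕ) : ℝ) - 1)) - -(1 / ((l : ℝ) - 1)) := by
      intro l hl
      have hl : (2 : ℝ) ≤ l := le_trans ha' (by exact_mod_cast (mem_Ico.mp hl).1)
      have : (l : ℝ) - 1 ≠ 0 := by linarith
      have : (l : ℝ) ≠ 0 := by linarith
      rw [Nat.cast_add_one, add_sub_cancel_right]
      field_simp
      ring
    rw [sum_congr rfl hterm, sum_Ico_sub (fun n : ℕ => -(1 / ((n : ℝ) - 1))) hat]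
    have : (a : ℝ) ≤ t := by exact_mod_cast hat
    have : 0 ≤ 1 / ((t : ℝ) - 1) := div_nonneg zero_le_one (by linarith)
    linarith
  · rw [Ico_eq_empty (by omega), sum_empty]
    exact div_nonneg zero_le_one (by linarith)

lemma sub_log_one_add_le_sq {c : ℝ} (hc : 0 ≤ c) : c - log (1 + c) ≤ c ^ 2 := by
  have hlog := one_sub_inv_le_log_of_pos (by linarith : (0 : ℝ) < 1 + c)
  have : c - c ^ 2 ≤ 1 - (1 + c)⁻¹ := by
    rw [← sub_nonneg, show 1 - (1 + c)⁻¹ - (c - c ^ 2) = c ^ 3 / (1 + c) by field_simp; ring]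
    positivity
  linarith

lemma tendsto_div_of_abs_sub_mul_le {α : Type*} {l : Filter α} {N D : α → ℝ} {a C : ℝ}
    (hD : Tendsto D l atTop) (hND : ∀ᶠ x in l, |N x - a * D x| ≤ C) :
    Tendsto (fun x => N x / D x) l (nhds a) := by
  have hbig : (fun x => N x - a * D x) =O[l] (fun _ => (1 : ℝ)) :=
    (Asymptotics.isBigO_one_iff ℝ).2 (isBoundedUnder_of_eventually_le (by simpa using hND))
  have hsmall : (fun _ => (1 : ℝ)) =o[l] D :=
    (Asymptotics.isLittleO_one_left_iff ℝ).2
      (by simpa [Function.comp_def] using tendsto_abs_atTop_atTop.comp hD)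
  have hrem := ((hbig.trans_isLittleO hsmall).tendsto_div_nhds_zero).const_add a
  rw [add_zero] at hrem
  refine hrem.congr' ?_
  filter_upwards [hD.eventually_ne_atTop 0] with x hx
  field_simp
  ring

section PAAPA

variable (m : ℕ) {l : ℕ}

lemma paapa_denom_pos (hl : 1 ≤ l) : 0 < (l : ℝ) * (2 * (m : ℝ) * l + 1 - 2 * m) := by
  have hl' : (1 : ℝ) ≤ l := by exact_mod_cast hl
  have : (0 : ℝ) ≤ m * (l - 1) := mul_nonneg m.cast_nonneg (by linarith)
  nlinarith

lemma ePAAPA_nonneg (hl : 1 ≤ l) : 0 ≤ ePAAPA m l :=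
  div_nonneg m.cast_nonneg (paapa_denom_pos m hl).le

lemma ePAAPA_le (hl : 2 ≤ l) : ePAAPA m l ≤ 1 / 2 * (1 / (((l : ℝ) - 1) * l)) := by
  have hl' : (2 : ℝ) ≤ l := by exact_mod_cast hl
  rw [ePAAPA, one_div_mul_one_div,
    div_le_div_iff₀ (paapa_denom_pos m (by omega)) (by nlinarith)]
  nlinarith

lemma one_div_le_cPAAPA (hl : 1 ≤ l) : 1 / (l : ℝ) ≤ cPAAPA m l := by
  have hl' : (1 : ℝ) ≤ l := by exact_mod_cast hl
  rw [cPAAPA, div_le_div_iff₀ (by positivity) (paapa_denom_pos m hl)]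
  nlinarith

lemma cPAAPA_le (hl : 2 ≤ l) : cPAAPA m l ≤ 3 / (l : ℝ) := by
  have hl' : (2 : ℝ) ≤ l := by exact_mod_cast hl
  have : (0 : ℝ) ≤ m * (l - 2) := mul_nonneg m.cast_nonneg (by linarith)
  rw [cPAAPA, div_le_div_iff₀ (paapa_denom_pos m (by omega)) (by positivity)]
  nlinarith

lemma cPAAPA_sq_le (hl : 2 ≤ l) : cPAAPA m l ^ 2 ≤ 9 * (1 / (((l : ℝ) - 1) * l)) := by
  have hl' : (2 : ℝ) ≤ l := by exact_mod_cast hl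
  have hc0 : 0 ≤ cPAAPA m l := le_trans (by positivity) (one_div_le_cPAAPA m (by omega))
  calc cPAAPA m l ^ 2 ≤ (3 / (l : ℝ)) ^ 2 := pow_le_pow_left₀ hc0 (cPAAPA_le m hl) 2
    _ ≤ 9 * (1 / (((l : ℝ) - 1) * l)) := by
      rw [div_pow, mul_one_div, div_le_div_iff₀ (by positivity) (by nlinarith)]
      nlinarith

lemma log_succ_sub_log_le_log_one_add_cPAAPA (hl : 1 ≤ l) :
    log ((l : ℝ) + 1) - log l ≤ log (1 + cPAAPA m l) := by
  have hl' : (1 : ℝ) ≤ l := by exact_mod_cast hl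
  rw [← log_div (by positivity) (by positivity)]
  refine log_le_log (by positivity) ?_
  have := one_div_le_cPAAPA m hl
  rw [add_div, div_self (by positivity)]
  linarith

lemma prod_one_sub_ePAAPA_mem_Icc {a : ℕ} (ha : 2 ≤ a) (t : ℕ) :
    ∏ l ∈ Ico a t, (1 - ePAAPA m l) ∈ Set.Icc (1 / 2) 1 := by
  have hmem : ∀ l ∈ Ico a t, 2 ≤ l := fun l hl => le_trans ha (mem_Ico.mp hl).1
  have hnonneg : ∀ l ∈ Ico a t, 0 ≤ ePAAPA m l := fun l hl =>
    ePAAPA_nonneg m (by linarith [hmem l hl])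
  have hsum : ∑ l ∈ Ico a t, ePAAPA m l ≤ 1 / 2 := by
    have ha' : (2 : ℝ) ≤ a := by exact_mod_cast ha
    calc ∑ l ∈ Ico a t, ePAAPA m l ≤ ∑ l ∈ Ico a t, 1 / 2 * (1 / (((l : ℝ) - 1) * l)) :=
          sum_le_sum fun l hl => ePAAPA_le m (hmem l hl)
      _ ≤ 1 / 2 * (1 / ((a : ℝ) - 1)) := by
          rw [← mul_sum]; gcongr; exact sum_Ico_one_div_sub_one_mul_le ha t
      _ ≤ 1 / 2 := by
          have : 1 / ((a : ℝ) - 1) ≤ 1 := by rw [div_le_one (by linarith)]; linarith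
          linarith
  have hle : ∀ l ∈ Ico a t, ePAAPA m l ≤ 1 := fun l hl =>
    ((single_le_sum hnonneg hl).trans hsum).trans (by norm_num)
  refine ⟨?_, prod_le_one (fun l hl => sub_nonneg.2 (hle l hl)) fun l hl => ?_⟩
  · linarith [one_sub_sum_le_prod_one_sub _ hnonneg hle]
  · linarith [hnonneg l hl]

noncomputable def qPAAPA (m l t : ℕ) : ℝ := ∏ h ∈ Ico (l + 1) t, (1 - ePAAPA m h)

lemma qPAAPA_mem_Icc (hl : 1 ≤ l) (t : ℕ) : qPAAPA m l t ∈ Set.Icc (1 / 2) 1 :=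
  prod_one_sub_ePAAPA_mem_Icc m (by omega) t

variable {i : ℕ}

lemma half_mul_log_sub_log_le_sum_log_mul_qPAAPA (hi : 1 ≤ i) {t : ℕ} (hit : i ≤ t) :
    1 / 2 * (log t - log i) ≤ ∑ l ∈ Ico i t, log (1 + cPAAPA m l) * qPAAPA m l t := by
  rw [← sum_Ico_sub (fun n : ℕ => log n) hit, mul_sum]
  refine sum_le_sum fun l hl => ?_
  have hl : 1 ≤ l := le_trans hi (mem_Ico.mp hl).1
  have hl' : (1 : ℝ) ≤ l := by exact_mod_cast hl
  have hlog := log_succ_sub_log_le_log_one_add_cPAAPA m hl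
  have hmono : log (l : ℝ) ≤ log ((l : ℝ) + 1) := log_le_log (by positivity) (by linarith)
  obtain ⟨hq, -⟩ := qPAAPA_mem_Icc m hl t
  push_cast
  nlinarith

lemma tendsto_sum_log_mul_qPAAPA (hi : 1 ≤ i) :
    Tendsto (fun t => ∑ l ∈ Ico i t, log (1 + cPAAPA m l) * qPAAPA m l t) atTop atTop := by
  have hlog : Tendsto (fun t : ℕ => 1 / 2 * (log t - log i)) atTop atTop :=
    (tendsto_atTop_add_const_right _ _
      (tendsto_log_atTop.comp tendsto_natCast_atTop_atTop)).const_mul_atTop (by norm_num)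
  refine tendsto_atTop_mono' _ ?_ hlog
  filter_upwards [eventually_ge_atTop i] with t hit
  exact half_mul_log_sub_log_le_sum_log_mul_qPAAPA m hi hit

lemma sum_sub_log_mul_qPAAPA_mem_Icc (hi : 2 ≤ i) (t : ℕ) :
    ∑ l ∈ Ico i t, (cPAAPA m l - log (1 + cPAAPA m l)) * qPAAPA m l t ∈ Set.Icc 0 9 := by
  have hterm : ∀ l ∈ Ico i t, 0 ≤ (cPAAPA m l - log (1 + cPAAPA m l)) * qPAAPA m l t ∧
      (cPAAPA m l - log (1 + cPAAPA m l)) * qPAAPA m l t ≤ 9 * (1 / (((l : ℝ) - 1) * l)) := by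
    intro l hl
    have hl : 2 ≤ l := le_trans hi (mem_Ico.mp hl).1
    have hc0 : 0 ≤ cPAAPA m l := le_trans (by positivity) (one_div_le_cPAAPA m (by omega))
    have hlog : log (1 + cPAAPA m l) ≤ cPAAPA m l := by
      linarith [log_le_sub_one_of_pos (by linarith : (0 : ℝ) < 1 + cPAAPA m l)]
    obtain ⟨hq0, hq1⟩ := qPAAPA_mem_Icc m (by omega : 1 ≤ l) t
    have hsq := (sub_log_one_add_le_sq hc0).trans (cPAAPA_sq_le m hl)
    constructor <;> nlinarith
  have hi' : (2 : ℝ) ≤ i := by exact_mod_cast hi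
  refine ⟨sum_nonneg fun l hl => (hterm l hl).1, ?_⟩
  calc _ ≤ ∑ l ∈ Ico i t, 9 * (1 / (((l : ℝ) - 1) * l)) :=
        sum_le_sum fun l hl => (hterm l hl).2
    _ ≤ 9 * (1 / ((i : ℝ) - 1)) := by
        rw [← mul_sum]; gcongr; exact sum_Ico_one_div_sub_one_mul_le hi t
    _ ≤ 9 := by
        have : 1 / ((i : ℝ) - 1) ≤ 1 := by rw [div_le_one (by linarith)]; linarith
        linarith

end PAAPA

theorem pa_apa_pure_anti_expected_degree_asymptotics_general (m i : ℕ) (hi : 2 ≤ i) :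
    Tendsto (fun t : ℕ =>
      ((m : ℝ) * (∏ l ∈ Finset.Ico i t, (1 - ePAAPA m l))
        + ∑ l ∈ Finset.Ico i t, (m : ℝ) * cPAAPA m l *
            ∏ h ∈ Finset.Ico (l + 1) t, (1 - ePAAPA m h))
      / (∑ l ∈ Finset.Ico i t, Real.log (1 + cPAAPA m l) *
            ∏ h ∈ Finset.Ico (l + 1) t, (1 - ePAAPA m h)))
      atTop (nhds (m : ℝ)) := by
  refine tendsto_div_of_abs_sub_mul_le (C := 10 * m)
    (tendsto_sum_log_mul_qPAAPA m (by omega)) (Eventually.of_forall fun t => ?_)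
  obtain ⟨hP0, hP1⟩ := prod_one_sub_ePAAPA_mem_Icc m hi t
  obtain ⟨hR0, hR1⟩ := sum_sub_log_mul_qPAAPA_mem_Icc m hi t
  have hsplit : (m : ℝ) * (∏ l ∈ Ico i t, (1 - ePAAPA m l))
      + ∑ l ∈ Ico i t, (m : ℝ) * cPAAPA m l * qPAAPA m l t
      - m * ∑ l ∈ Ico i t, log (1 + cPAAPA m l) * qPAAPA m l t
      = m * (∏ l ∈ Ico i t, (1 - ePAAPA m l)
        + ∑ l ∈ Ico i t, (cPAAPA m l - log (1 + cPAAPA m l)) * qPAAPA m l t) := by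
    simp only [mul_sum, sum_sub_distrib, mul_add, sub_mul, mul_sub, mul_assoc]
    ring
  have hm : (0 : ℝ) ≤ m := m.cast_nonneg
  calc |_| = (m : ℝ) * (∏ l ∈ Ico i t, (1 - ePAAPA m l)
        + ∑ l ∈ Ico i t, (cPAAPA m l - log (1 + cPAAPA m l)) * qPAAPA m l t) :=
        (congrArg abs hsplit).trans (abs_of_nonneg (mul_nonneg hm (by linarith)))
    _ ≤ 10 * m := by nlinarith

/-- Theorem 3.6 of the paper: in the pure anti-preferential attachment model (`p = 1`)
the expected degree `a_t = m ∏_{l=i}^{t-1}(1-e_l) + ∑_{l=i}^{t-1} m c_l ∏_{h=l+1}^{t-1}(1-e_h)`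
satisfies `a_t / (∑_{l=i}^{t-1} ln(1+c_l) ∏_{h=l+1}^{t-1}(1-e_h)) → m`. -/
theorem pa_apa_pure_anti_expected_degree_asymptotics (m i : ℕ) (hm : 1 ≤ m) (hi : 2 ≤ i) :
    Tendsto (fun t : ℕ =>
      ((m : ℝ) * (∏ l ∈ Finset.Ico i t, (1 - ePAAPA m l))
        + ∑ l ∈ Finset.Ico i t, (m : ℝ) * cPAAPA m l *
            ∏ h ∈ Finset.Ico (l + 1) t, (1 - ePAAPA m h))
      / (∑ l ∈ Finset.Ico i t, Real.log (1 + cPAAPA m l) *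
            ∏ h ∈ Finset.Ico (l + 1) t, (1 - ePAAPA m h)))
      atTop (nhds (m : ℝ)) :=
  pa_apa_pure_anti_expected_degree_asymptotics_general m i hi
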